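/- Define b₀ = 0 and bₖ = E_{k−1}(1) for k ≥ 1, where Eₘ(x) is the Euler polynomial. Then for all n ≥ 1, Hₙ(bₖ) = (−1)^{n−1} · (2^{n+1}/n!) · (∑_{j=1}^n (−1)^{j−1}/j) · Hₙ(Eₖ(1)). -/

import Mathlib

/-!
The `Eₖ(1)` are the moments of a functional `L` on `ℚ[X]` with exponential generating function
`2eᵗ/(eᵗ + 1) = 1 + w`, `w = tanh(t/2)`. For the polynomials `pₙ₊₂ = (X - 1/2) pₙ₊₁ + ((n+1)²/4) pₙ`
one has `L(pₙ Xˢ) = γₙ · s! [tˢ] (wⁿ + wⁿ⁺¹)` with `γₙ = pₙ(0) = (-1/2)ⁿ n!`; as `w = t/2 + O(t²)`,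
the `pₙ` are orthogonal with `L(pₙ²) = (-1)ⁿ γₙ²`, and conjugating by their coefficient matrix
diagonalises the Hankel matrix. The shifted sequence is the moment sequence of
`L'(f) = L((f - f(0))/X)`, whose Gram matrix in the same basis is `γᵢ γⱼ r_{max(i,j)}` with
`rₖ = -2 ∑_{j<k} (-1)ʲ/(j+1)`.
-/

/-- The Hankel determinant `Hₙ(c) = det (c_{i+j})_{0 ≤ i,j ≤ n}`. -/
def hankel (c : ℕ → ℚ) (n : ℕ) : ℚ :=
  Matrix.det (Matrix.of fun i j : Fin (n + 1) => c (i.1 + j.1))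

/-- Evaluation `Eₙ(x)` of the Euler polynomials, defined by the recurrence
`Eₙ(x) = xⁿ - (1/2) ∑_{k<n} C(n,k) Eₖ(x)`, equivalent to the generating function
`2e^{xt}/(e^t+1) = ∑ Eₙ(x) tⁿ/n!`. -/
def eulerEval (x : ℚ) : ℕ → ℚ :=
  WellFounded.fix Nat.lt_wfRel.wf fun n E =>
    x ^ n - 2⁻¹ * ∑ k : Fin n, (n.choose k : ℚ) * E k k.2

open Polynomial Finset Nat

lemma eulerEval_eq (x : ℚ) (n : ℕ) :
    eulerEval x n = x ^ n - 2⁻¹ * ∑ k ∈ range n, (n.choose k : ℚ) * eulerEval x k := by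
  rw [sum_range]
  conv_lhs => rw [eulerEval, WellFounded.fix_eq]
  rfl

/-- `tanhCoeff r s = s! [tˢ] tanh(t/2)ʳ`; the recursion is `(wʳ⁺¹)' = (r+1)/2 · wʳ (1 - w²)`
for `w = tanh(t/2)`. -/
def tanhCoeff : ℕ → ℕ → ℚ
  | 0, 0 => 1
  | _ + 1, 0 => 0
  | 0, _ + 1 => 0
  | r + 1, s + 1 => ((r : ℚ) + 1) / 2 * (tanhCoeff r s - tanhCoeff (r + 2) s)
termination_by _ s => s

@[simp] lemma tanhCoeff_zero_zero : tanhCoeff 0 0 = 1 := by rw [tanhCoeff]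
@[simp] lemma tanhCoeff_succ_zero (r : ℕ) : tanhCoeff (r + 1) 0 = 0 := by rw [tanhCoeff]
@[simp] lemma tanhCoeff_zero_succ (s : ℕ) : tanhCoeff 0 (s + 1) = 0 := by rw [tanhCoeff]

lemma tanhCoeff_succ_succ (r s : ℕ) :
    tanhCoeff (r + 1) (s + 1) = ((r : ℚ) + 1) / 2 * (tanhCoeff r s - tanhCoeff (r + 2) s) := by
  rw [tanhCoeff]

lemma tanhCoeff_of_lt {r s : ℕ} (h : s < r) : tanhCoeff r s = 0 := by
  induction s generalizing r with
  | zero => obtain ⟨r, rfl⟩ := Nat.exists_eq_succ_of_ne_zero h.ne'; simp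
  | succ s ih =>
    obtain ⟨r, rfl⟩ := Nat.exists_eq_succ_of_ne_zero (by omega : r ≠ 0)
    rw [tanhCoeff_succ_succ, ih (by omega), ih (by omega), sub_zero, mul_zero]

lemma tanhCoeff_self (n : ℕ) : tanhCoeff n n = n ! / 2 ^ n := by
  induction n with
  | zero => simp
  | succ n ih =>
    rw [tanhCoeff_succ_succ, ih, tanhCoeff_of_lt (by omega), Nat.factorial_succ]
    push_cast
    ring

/-- `expTanhCoeff r s = s! [tˢ] eᵗ tanh(t/2)ʳ`. -/
def expTanhCoeff (r s : ℕ) : ℚ := ∑ k ∈ range (s + 1), (s.choose k : ℚ) * tanhCoeff r k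

lemma expTanhCoeff_zero_left (s : ℕ) : expTanhCoeff 0 s = 1 := by
  rw [expTanhCoeff, sum_eq_single 0 (fun k _ hk => ?_) (by simp)]
  · simp
  · obtain ⟨k, rfl⟩ := Nat.exists_eq_succ_of_ne_zero hk; simp

lemma expTanhCoeff_zero_right (r : ℕ) : expTanhCoeff r 0 = tanhCoeff r 0 := by
  simp [expTanhCoeff]

lemma expTanhCoeff_succ (r s : ℕ) :
    expTanhCoeff r (s + 1)
      = expTanhCoeff r s + ∑ k ∈ range (s + 1), (s.choose k : ℚ) * tanhCoeff r (k + 1) := by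
  have h : expTanhCoeff r s
      = ∑ k ∈ range (s + 1), (s.choose (k + 1) : ℚ) * tanhCoeff r (k + 1) + tanhCoeff r 0 := by
    rw [expTanhCoeff, sum_range_succ' _ s, sum_range_succ _ s]
    simp
  rw [h, expTanhCoeff, sum_range_succ']
  simp only [Nat.choose_succ_succ, Nat.cast_add, add_mul, sum_add_distrib, choose_zero_right,
    cast_one, one_mul]
  ring

lemma expTanhCoeff_succ_succ (r s : ℕ) :
    expTanhCoeff (r + 1) (s + 1)
      = expTanhCoeff (r + 1) s
        + ((r : ℚ) + 1) / 2 * (expTanhCoeff r s - expTanhCoeff (r + 2) s) := by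
  rw [expTanhCoeff_succ]
  simp only [tanhCoeff_succ_succ, expTanhCoeff, mul_sum, ← sum_sub_distrib]
  exact congrArg _ (sum_congr rfl fun _ _ => by ring)

/-- `(eᵗ + 1) wʳ⁺¹ = (eᵗ - 1) wʳ` for `w = tanh(t/2)`. -/
lemma expTanhCoeff_add_tanhCoeff (s : ℕ) : ∀ r : ℕ,
    expTanhCoeff (r + 1) s + tanhCoeff (r + 1) s = expTanhCoeff r s - tanhCoeff r s := by
  induction s with
  | zero => intro r; cases r <;> simp [expTanhCoeff_zero_right]
  | succ s ih =>
    rintro (_ | r)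
    · rw [expTanhCoeff_succ_succ, tanhCoeff_succ_succ, expTanhCoeff_zero_left,
        expTanhCoeff_zero_left, tanhCoeff_zero_succ]
      have h0 := ih 0
      rw [expTanhCoeff_zero_left] at h0
      linear_combination (1 / 2 : ℚ) * h0 - (1 / 2 : ℚ) * ih 1
    · rw [expTanhCoeff_succ_succ, tanhCoeff_succ_succ, expTanhCoeff_succ_succ r,
        tanhCoeff_succ_succ r]
      push_cast
      linear_combination ((r : ℚ) + 1) / 2 * ih r + (1 / 2 : ℚ) * ih (r + 1)
        - ((r : ℚ) + 2) / 2 * ih (r + 2)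

/-- `2eᵗ/(eᵗ + 1) = 1 + tanh(t/2)`. -/
lemma eulerEval_one (s : ℕ) : eulerEval 1 s = tanhCoeff 0 s + tanhCoeff 1 s := by
  induction s using Nat.strong_induction_on with
  | _ s ih =>
    have hsum : ∑ k ∈ range s, (s.choose k : ℚ) * eulerEval 1 k
        = expTanhCoeff 0 s - tanhCoeff 0 s + (expTanhCoeff 1 s - tanhCoeff 1 s) := by
      simp only [expTanhCoeff, sum_range_succ _ s, Nat.choose_self, Nat.cast_one, one_mul,
        add_sub_cancel_right, ← sum_add_distrib, ← mul_add]
      exact sum_congr rfl fun k hk => by rw [ih k (mem_range.mp hk)]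
    have h := expTanhCoeff_add_tanhCoeff s 0
    rw [expTanhCoeff_zero_left] at h hsum
    rw [eulerEval_eq, hsum, one_pow]
    linear_combination (-1 / 2 : ℚ) * h

section

variable {R : Type*} [CommRing R]

def moment (c : ℕ → R) : R[X] →ₗ[R] R := lsum fun k => c k • LinearMap.id

lemma moment_monomial (c : ℕ → R) (k : ℕ) (a : R) : moment c (monomial k a) = a * c k := by
  simp [moment, lsum_apply, sum_monomial_index, mul_comm]

lemma moment_X_pow (c : ℕ → R) (k : ℕ) : moment c (X ^ k) = c k := by
  rw [← monomial_one_right_eq_X_pow, moment_monomial, one_mul]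

lemma moment_C_mul (c : ℕ → R) (a : R) (f : R[X]) : moment c (C a * f) = a * moment c f := by
  rw [C_mul', map_smul, smul_eq_mul]

lemma moment_mul_eq_sum (c : ℕ → R) {n : ℕ} {f g : R[X]} (hf : f.natDegree ≤ n)
    (hg : g.natDegree ≤ n) :
    moment c (f * g)
      = ∑ l : Fin (n + 1), (∑ k : Fin (n + 1), f.coeff k * c (k + l)) * g.coeff l := by
  conv_lhs => rw [f.as_sum_range' (n + 1) (by omega), g.as_sum_range' (n + 1) (by omega)]
  simp only [sum_mul, mul_sum, map_sum, monomial_mul_monomial, moment_monomial, sum_range]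
  exact sum_congr rfl fun _ _ => sum_congr rfl fun _ _ => by ring

lemma moment_shift_X_mul (c : ℕ → R) (f : R[X]) :
    moment (fun k => if k = 0 then 0 else c (k - 1)) (X * f) = moment c f := by
  induction f using Polynomial.induction_on' with
  | add f g hf hg => rw [mul_add, map_add, map_add, hf, hg]
  | monomial k a => simp only [X_mul_monomial, moment_monomial, add_tsub_cancel_right,
      add_eq_zero, one_ne_zero, and_false, if_false]

lemma moment_shift_one (c : ℕ → R) : moment (fun k => if k = 0 then 0 else c (k - 1)) 1 = 0 := by
  simpa using moment_X_pow (fun k => if k = 0 then 0 else c (k - 1)) 0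

/-- Subtracting row `1` from row `0` leaves a single entry in row `0`. -/
lemma det_of_max (n : ℕ) (r : ℕ → R) :
    (Matrix.of fun i j : Fin (n + 1) => r (max i.1 j.1)).det
      = r n * ∏ j ∈ range n, (r j - r (j + 1)) := by
  induction n generalizing r with
  | zero => simp
  | succ n ih =>
    set M : Matrix (Fin (n + 2)) (Fin (n + 2)) R := Matrix.of fun i j => r (max i.1 j.1)
    set N : Matrix (Fin (n + 2)) (Fin (n + 2)) R := Matrix.of fun i j =>
      if i = 0 then (if j = 0 then r 0 - r 1 else 0) else r (max i.1 j.1)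
    have hrow : M.updateRow 0 (M 0 + (-1 : R) • M 1) = N := by
      ext i j
      rcases Fin.eq_zero_or_eq_succ i with rfl | ⟨i, rfl⟩
      · rcases Fin.eq_zero_or_eq_succ j with rfl | ⟨j, rfl⟩
        · simp [M, N, sub_eq_add_neg]
        · simp [M, N]
      · simp [M, N, Fin.succ_ne_zero]
    have hminor : N.submatrix Fin.succ Fin.succ
        = Matrix.of fun i j : Fin (n + 1) => r (max i.1 j.1 + 1) := by
      ext i j
      simp [N, Nat.succ_max_succ]
    rw [← Matrix.det_updateRow_add_smul_self M (i := 0) (j := 1) zero_ne_one, hrow,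
      Matrix.det_succ_row_zero, Fin.sum_univ_succ, Fin.succAbove_zero, hminor,
      ih fun k => r (k + 1), prod_range_succ']
    simp only [Fin.coe_ofNat_eq_mod, Nat.zero_mod, pow_zero, Matrix.of_apply, if_true, one_mul,
      Fin.val_succ, Fin.succ_ne_zero, if_false, mul_zero, zero_mul, sum_const_zero, add_zero, N]
    ring

end

lemma hankel_eq_det_moment (c : ℕ → ℚ) (n : ℕ) {P : ℕ → ℚ[X]} (hmonic : ∀ i, (P i).Monic)
    (hdeg : ∀ i, (P i).natDegree = i) :
    hankel c n = (Matrix.of fun i j : Fin (n + 1) => moment c (P i * P j)).det := by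
  set A : Matrix (Fin (n + 1)) (Fin (n + 1)) ℚ := Matrix.of fun i k => (P i).coeff k
  have hA : A.det = 1 := by
    have hlow : A.IsLowerTriangular := fun i k (hik : i < k) =>
      coeff_eq_zero_of_natDegree_lt ((hdeg i).trans_lt hik)
    rw [Matrix.det_of_isLowerTriangular A hlow]
    refine prod_eq_one fun i _ => ?_
    have h := (hmonic i).leadingCoeff
    rwa [leadingCoeff, hdeg] at h
  have hconj : (Matrix.of fun i j : Fin (n + 1) => moment c (P i * P j))
      = A * Matrix.of (fun i j : Fin (n + 1) => c (i.1 + j.1)) * A.transpose := by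
    ext i j
    rw [Matrix.of_apply, moment_mul_eq_sum c ((hdeg i).le.trans (Nat.lt_succ_iff.mp i.2))
      ((hdeg j).le.trans (Nat.lt_succ_iff.mp j.2))]
    simp [A, Matrix.mul_apply]
  rw [hankel, hconj, Matrix.det_mul, Matrix.det_mul, Matrix.det_transpose, hA, one_mul, mul_one]

noncomputable def eulerOrthoPoly : ℕ → ℚ[X]
  | 0 => 1
  | 1 => X - C (1 / 2)
  | n + 2 => (X - C (1 / 2)) * eulerOrthoPoly (n + 1)
      + C (((n : ℚ) + 1) ^ 2 / 4) * eulerOrthoPoly n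

lemma eulerOrthoPoly_monic_and_natDegree (n : ℕ) :
    (eulerOrthoPoly n).Monic ∧ (eulerOrthoPoly n).natDegree = n := by
  induction n using Nat.twoStepInduction with
  | zero => simp [eulerOrthoPoly]
  | one => simp [eulerOrthoPoly, monic_X_sub_C]
  | more n ih₀ ih₁ =>
    have hmul : ((X - C (1 / 2)) * eulerOrthoPoly (n + 1)).Monic
        ∧ ((X - C (1 / 2)) * eulerOrthoPoly (n + 1)).natDegree = n + 2 := by
      refine ⟨(monic_X_sub_C _).mul ih₁.1, ?_⟩
      rw [(monic_X_sub_C _).natDegree_mul ih₁.1, natDegree_X_sub_C, ih₁.2]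
      ring
    have hlow : (C (((n : ℚ) + 1) ^ 2 / 4) * eulerOrthoPoly n).degree
        < ((X - C (1 / 2)) * eulerOrthoPoly (n + 1)).degree := by
      rw [degree_eq_natDegree hmul.1.ne_zero, hmul.2]
      refine degree_le_natDegree.trans_lt ?_
      exact_mod_cast (natDegree_C_mul_le _ _).trans_lt (by rw [ih₀.2]; omega)
    rw [eulerOrthoPoly]
    exact ⟨hmul.1.add_of_left hlow, (natDegree_add_eq_left_of_degree_lt hlow).trans hmul.2⟩

lemma eulerOrthoPoly_monic (n : ℕ) : (eulerOrthoPoly n).Monic :=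
  (eulerOrthoPoly_monic_and_natDegree n).1

lemma natDegree_eulerOrthoPoly (n : ℕ) : (eulerOrthoPoly n).natDegree = n :=
  (eulerOrthoPoly_monic_and_natDegree n).2

lemma degree_eulerOrthoPoly (n : ℕ) : (eulerOrthoPoly n).degree = n := by
  rw [degree_eq_natDegree (eulerOrthoPoly_monic n).ne_zero, natDegree_eulerOrthoPoly]

lemma coeff_zero_eulerOrthoPoly (n : ℕ) : (eulerOrthoPoly n).coeff 0 = (-1 / 2) ^ n * n ! := by
  induction n using Nat.twoStepInduction with
  | zero => simp [eulerOrthoPoly]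
  | one => norm_num [eulerOrthoPoly]
  | more n ih₀ ih₁ =>
    simp only [eulerOrthoPoly, coeff_add, mul_coeff_zero, coeff_C_zero, coeff_sub, coeff_X_zero,
      ih₁, ih₀, factorial_succ]
    push_cast
    ring

lemma moment_eulerOrthoPoly_mul_X_pow (n s : ℕ) :
    moment (eulerEval 1) (eulerOrthoPoly n * X ^ s)
      = (-1 / 2) ^ n * n ! * (tanhCoeff n s + tanhCoeff (n + 1) s) := by
  induction n using Nat.twoStepInduction generalizing s with
  | zero => simp [eulerOrthoPoly, moment_X_pow, eulerEval_one]
  | one =>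
    have h : (X - C (1 / 2 : ℚ)) * X ^ s = X ^ (s + 1) - C (1 / 2) * X ^ s := by ring
    rw [eulerOrthoPoly, h, map_sub, moment_C_mul, moment_X_pow, moment_X_pow, eulerEval_one,
      eulerEval_one, tanhCoeff_zero_succ, tanhCoeff_succ_succ]
    norm_num
    ring
  | more n ih₀ ih₁ =>
    have h : eulerOrthoPoly (n + 2) * X ^ s = eulerOrthoPoly (n + 1) * X ^ (s + 1)
        - C (1 / 2) * (eulerOrthoPoly (n + 1) * X ^ s)
        + C (((n : ℚ) + 1) ^ 2 / 4) * (eulerOrthoPoly n * X ^ s) := by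
      rw [eulerOrthoPoly]; ring
    rw [h, map_add, map_sub, moment_C_mul, moment_C_mul, ih₁, ih₁, ih₀, tanhCoeff_succ_succ,
      tanhCoeff_succ_succ]
    push_cast [factorial_succ]
    ring

lemma moment_eulerOrthoPoly_mul_eq_zero {n : ℕ} {q : ℚ[X]} (hq : q.degree < n) :
    moment (eulerEval 1) (eulerOrthoPoly n * q) = 0 := by
  rcases eq_or_ne q 0 with rfl | hq0
  · rw [mul_zero, map_zero]
  have hlt : q.natDegree < n := (natDegree_lt_iff_degree_lt hq0).mpr hq
  rw [q.as_sum_range_C_mul_X_pow, mul_sum, map_sum]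
  refine sum_eq_zero fun s hs => ?_
  have hs : s < n := (mem_range.mp hs).trans_le hlt
  rw [mul_left_comm, moment_C_mul, moment_eulerOrthoPoly_mul_X_pow, tanhCoeff_of_lt hs,
    tanhCoeff_of_lt (hs.trans n.lt_succ_self), add_zero, mul_zero, mul_zero]

lemma moment_eulerOrthoPoly_mul_self (n : ℕ) :
    moment (eulerEval 1) (eulerOrthoPoly n * eulerOrthoPoly n)
      = (-1) ^ n * ((-1 / 2) ^ n * n !) ^ 2 := by
  have hlow : (eulerOrthoPoly n - X ^ n).degree < (n : WithBot ℕ) := by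
    have h := degree_sub_lt_left (p := eulerOrthoPoly n) (q := X ^ n)
      (by rw [degree_X_pow, degree_eulerOrthoPoly]) (eulerOrthoPoly_monic n).ne_zero
      (by rw [(eulerOrthoPoly_monic n).leadingCoeff, leadingCoeff_X_pow])
    rwa [degree_eulerOrthoPoly] at h
  have hsplit : eulerOrthoPoly n * eulerOrthoPoly n
      = eulerOrthoPoly n * X ^ n + eulerOrthoPoly n * (eulerOrthoPoly n - X ^ n) := by ring
  rw [hsplit, map_add,
    moment_eulerOrthoPoly_mul_eq_zero hlow, moment_eulerOrthoPoly_mul_X_pow, tanhCoeff_self,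
    tanhCoeff_of_lt n.lt_succ_self, add_zero, add_zero, div_pow]
  have hsign : ((-1 : ℚ) ^ n) ^ 2 = 1 := by rw [← pow_mul, pow_mul', neg_one_sq, one_pow]
  linear_combination -(-1 : ℚ) ^ n * (n ! / 2 ^ n) ^ 2 * hsign

lemma moment_eulerOrthoPoly_mul_eulerOrthoPoly (i j : ℕ) :
    moment (eulerEval 1) (eulerOrthoPoly i * eulerOrthoPoly j)
      = if i = j then (-1 : ℚ) ^ i * ((-1 / 2) ^ i * i !) ^ 2 else 0 := by
  have hdeg {k l : ℕ} (h : k < l) : (eulerOrthoPoly k).degree < l := by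
    rw [degree_eulerOrthoPoly]; exact_mod_cast h
  rcases lt_trichotomy i j with h | rfl | h
  · rw [mul_comm, moment_eulerOrthoPoly_mul_eq_zero (hdeg h), if_neg h.ne]
  · rw [moment_eulerOrthoPoly_mul_self, if_pos rfl]
  · rw [moment_eulerOrthoPoly_mul_eq_zero (hdeg h), if_neg h.ne']

lemma moment_shift_eulerOrthoPoly (n : ℕ) :
    moment (fun k => if k = 0 then 0 else eulerEval 1 (k - 1)) (eulerOrthoPoly n)
      = -2 * ((-1 / 2) ^ n * n !) * ∑ j ∈ range n, (-1) ^ j / ((j : ℚ) + 1) := by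
  induction n using Nat.twoStepInduction with
  | zero => simp [eulerOrthoPoly, moment_shift_one]
  | one =>
    rw [eulerOrthoPoly, ← mul_one X, ← mul_one (C _), map_sub, moment_shift_X_mul, moment_C_mul,
      moment_shift_one, ← pow_zero X, moment_X_pow, eulerEval_one]
    norm_num
  | more n ih₀ ih₁ =>
    have h : eulerOrthoPoly (n + 2) = X * eulerOrthoPoly (n + 1)
        - C (1 / 2) * eulerOrthoPoly (n + 1) + C (((n : ℚ) + 1) ^ 2 / 4) * eulerOrthoPoly n := by
      rw [eulerOrthoPoly]; ring
    have horth : moment (eulerEval 1) (eulerOrthoPoly (n + 1)) = 0 := by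
      simpa using moment_eulerOrthoPoly_mul_X_pow (n + 1) 0
    rw [h, map_add, map_sub, moment_shift_X_mul, horth, moment_C_mul, moment_C_mul, ih₀, ih₁,
      sum_range_succ _ (n + 1), sum_range_succ _ n]
    push_cast [factorial_succ]
    field_simp
    ring

lemma moment_shift_eulerOrthoPoly_mul_of_le {i j : ℕ} (hji : j ≤ i) :
    moment (fun k => if k = 0 then 0 else eulerEval 1 (k - 1)) (eulerOrthoPoly i * eulerOrthoPoly j)
      = (eulerOrthoPoly j).coeff 0
        * moment (fun k => if k = 0 then 0 else eulerEval 1 (k - 1)) (eulerOrthoPoly i) := by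
  have hlow : (divX (eulerOrthoPoly j)).degree < i := by
    refine (degree_divX_lt (eulerOrthoPoly_monic j).ne_zero).trans_le ?_
    rw [degree_eulerOrthoPoly]
    exact_mod_cast hji
  have h : eulerOrthoPoly i * eulerOrthoPoly j = X * (eulerOrthoPoly i * divX (eulerOrthoPoly j))
      + C ((eulerOrthoPoly j).coeff 0) * eulerOrthoPoly i := by
    conv_lhs => rw [← X_mul_divX_add (eulerOrthoPoly j)]
    ring
  rw [h, map_add, moment_shift_X_mul, moment_eulerOrthoPoly_mul_eq_zero hlow, moment_C_mul,
    zero_add]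

lemma moment_shift_eulerOrthoPoly_mul_eulerOrthoPoly (i j : ℕ) :
    moment (fun k => if k = 0 then 0 else eulerEval 1 (k - 1)) (eulerOrthoPoly i * eulerOrthoPoly j)
      = ((-1 / 2) ^ i * i !) * ((-1 / 2) ^ j * j !)
        * (-2 * ∑ l ∈ range (max i j), (-1) ^ l / ((l : ℚ) + 1)) := by
  rcases le_total j i with h | h
  · rw [moment_shift_eulerOrthoPoly_mul_of_le h, coeff_zero_eulerOrthoPoly,
      moment_shift_eulerOrthoPoly, max_eq_left h]
    ring
  · rw [mul_comm, moment_shift_eulerOrthoPoly_mul_of_le h, coeff_zero_eulerOrthoPoly,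
      moment_shift_eulerOrthoPoly, max_eq_right h]
    ring

lemma hankel_eulerEval_one (n : ℕ) :
    hankel (fun k => eulerEval 1 k) n
      = (∏ i ∈ range (n + 1), (-1 : ℚ) ^ i)
        * (∏ i ∈ range (n + 1), (-1 / 2 : ℚ) ^ i * i !) ^ 2 := by
  rw [hankel_eq_det_moment _ n eulerOrthoPoly_monic natDegree_eulerOrthoPoly]
  have hdiag : (Matrix.of fun i j : Fin (n + 1) =>
      moment (fun k => eulerEval 1 k) (eulerOrthoPoly i * eulerOrthoPoly j))
      = Matrix.diagonal fun i : Fin (n + 1) => (-1 : ℚ) ^ i.1 * ((-1 / 2) ^ i.1 * (i.1)!) ^ 2 := by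
    ext i j
    rw [Matrix.of_apply, moment_eulerOrthoPoly_mul_eulerOrthoPoly, Matrix.diagonal_apply]
    simp only [Fin.val_inj]
  rw [hdiag, Matrix.det_diagonal,
    Fin.prod_univ_eq_prod_range (fun i => (-1 : ℚ) ^ i * ((-1 / 2) ^ i * i !) ^ 2),
    prod_mul_distrib, prod_pow]

lemma hankel_shift_eulerEval_one (n : ℕ) :
    hankel (fun k => if k = 0 then 0 else eulerEval 1 (k - 1)) n
      = (∏ i ∈ range (n + 1), (-1 / 2 : ℚ) ^ i * i !) ^ 2
        * (-2 * ∑ j ∈ range n, (-1) ^ j / ((j : ℚ) + 1))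
        * (2 ^ n / n ! * ∏ j ∈ range n, (-1 : ℚ) ^ j) := by
  rw [hankel_eq_det_moment _ n eulerOrthoPoly_monic natDegree_eulerOrthoPoly]
  have hfactor : (Matrix.of fun i j : Fin (n + 1) => moment
      (fun k => if k = 0 then 0 else eulerEval 1 (k - 1)) (eulerOrthoPoly i * eulerOrthoPoly j))
      = Matrix.diagonal (fun i : Fin (n + 1) => (-1 / 2 : ℚ) ^ i.1 * (i.1)!)
        * (Matrix.of fun i j : Fin (n + 1) =>
          -2 * ∑ l ∈ range (max i.1 j.1), (-1) ^ l / ((l : ℚ) + 1))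
        * Matrix.diagonal (fun i : Fin (n + 1) => (-1 / 2 : ℚ) ^ i.1 * (i.1)!) := by
    ext i j
    simp only [Matrix.mul_diagonal, Matrix.diagonal_mul, Matrix.of_apply,
      moment_shift_eulerOrthoPoly_mul_eulerOrthoPoly]
    ring
  have hstep (j : ℕ) : -2 * ∑ l ∈ range j, (-1) ^ l / ((l : ℚ) + 1)
      - -2 * ∑ l ∈ range (j + 1), (-1) ^ l / ((l : ℚ) + 1) = 2 * (-1) ^ j / (j + 1) := by
    rw [sum_range_succ]; ring
  rw [hfactor, Matrix.det_mul, Matrix.det_mul, Matrix.det_diagonal,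
    det_of_max n fun m => -2 * ∑ l ∈ range m, (-1) ^ l / ((l : ℚ) + 1),
    Fin.prod_univ_eq_prod_range (fun i => (-1 / 2 : ℚ) ^ i * i !)]
  simp only [hstep, prod_div_distrib, prod_mul_distrib, prod_const, card_range]
  rw [← prod_range_add_one_eq_factorial]
  push_cast
  ring

theorem hankel_shifted_eulerEval_one_general (n : ℕ) :
    hankel (fun k => if k = 0 then 0 else eulerEval 1 (k - 1)) n
      = (-1) ^ (n - 1) * (2 ^ (n + 1) / (n.factorial : ℚ))
        * (∑ j ∈ Finset.range n, (-1) ^ j / ((j : ℚ) + 1))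
        * hankel (fun k => eulerEval 1 k) n := by
  rw [hankel_shift_eulerEval_one, hankel_eulerEval_one]
  rcases n with _ | n
  · simp
  · rw [prod_range_succ (fun i => (-1 : ℚ) ^ i) (n + 1), Nat.add_sub_cancel, pow_succ (-1 : ℚ) n]
    rcases neg_one_pow_eq_or ℚ n with h | h <;> rw [h] <;> ring

theorem hankel_shifted_eulerEval_one (n : ℕ) (hn : 1 ≤ n) :
    hankel (fun k => if k = 0 then 0 else eulerEval 1 (k - 1)) n
      = (-1) ^ (n - 1) * (2 ^ (n + 1) / (n.factorial : ℚ))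
        * (∑ j ∈ Finset.range n, (-1) ^ j / ((j : ℚ) + 1))
        * hankel (fun k => eulerEval 1 k) n :=
  hankel_shifted_eulerEval_one_general n
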